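/- For every real number λ and all positive integers n and m, Σ_{k=1}^{n} C(n,k) ((-1)^{k-1}/k^m) binom(λ+k-1, k-1) = Σ_{1 ≤ k_1 ≤ k_2 ≤ ⋯ ≤ k_m ≤ n} ((-1)^{k_1 - 1}/(k_1 k_2 ⋯ k_m)) binom(λ-1, k_1 - 1), where the right-hand sum is over all weakly increasing m-tuples (k_1, …, k_m) of positive integers with k_m ≤ n. -/

import Mathlib

/-- Generalized binomial coefficient `binom(x, k) = x (x-1) ⋯ (x-k+1) / k!` for real `x`. -/
noncomputable def rchoose (x : ℝ) (k : ℕ) : ℝ :=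
  (∏ i ∈ Finset.range k, (x - i)) / (Nat.factorial k)

/-!
Write `H f (n) = ∑_{j=1}^n f(j) / j`. Splitting off the largest index `k_m` shows that the
multiple sum is `H^m φ (n)` with `φ(k) = (-1)^(k-1) binom(λ-1, k-1)`. On the left, the hockey
stick identity `∑_{j=k}^n C(j,k) / j = C(n,k) / k` lowers the power of `k` by one at the cost
of one application of `H`, so the left side is `H^m` applied to
`n ↦ ∑_k C(n,k) (-1)^(k-1) binom(λ+k-1, k-1)`. By upper negation this is the Chu–Vandermonde
convolution `∑_k C(n,k) binom(-λ-1, k-1) = binom(n-λ-1, n-1)`, which is `φ(n)` by upper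
negation again.
-/

open Finset

namespace Ring

variable {R : Type*} [CommRing R] [BinomialRing R]

lemma neg_one_pow_mul_choose_add_self (r : R) (k : ℕ) :
    (-1) ^ k * choose (r + k) k = choose (-r - 1) k := by
  rw [neg_sub_left, choose_neg, Units.smul_def, zsmul_eq_mul, Int.cast_negOnePow_natCast,
    show 1 + r + (k : R) - 1 = r + k by ring]

lemma sum_choose_mul_neg_one_pow_mul_choose (r : R) (n : ℕ) :
    ∑ k ∈ range (n + 1), ((n + 1).choose (k + 1) : R) * ((-1) ^ k * choose (r + k) k) =
      (-1) ^ n * choose (r - 1) n := by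
  have hvandermonde := add_choose_eq n (Commute.all (-r - 1) ((n + 1 : ℕ) : R))
  rw [Nat.sum_antidiagonal_eq_sum_range_succ_mk] at hvandermonde
  have hupper : (-1) ^ n * choose (r - 1) n = choose (-r - 1 + (n + 1 : ℕ)) n := by
    rw [← neg_neg r, ← neg_one_pow_mul_choose_add_self, neg_neg, ← mul_assoc, ← pow_add,
      Even.neg_one_pow ⟨n, rfl⟩, one_mul]
    push_cast
    ring_nf
  rw [hupper, hvandermonde]
  refine sum_congr rfl fun k hk => ?_
  rw [neg_one_pow_mul_choose_add_self, choose_natCast, mul_comm,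
    Nat.choose_symm_of_eq_add (show n + 1 = (k + 1) + (n - k) by simp at hk; omega)]

end Ring

lemma rchoose_eq_ringChoose (x : ℝ) (k : ℕ) : rchoose x k = Ring.choose x k := by
  rw [Ring.choose_eq_smul, ← Polynomial.aeval_eq_smeval, Polynomial.aeval_def,
    Polynomial.eval₂_eq_eval_map, descPochhammer_map, descPochhammer_eval_eq_prod_range, rchoose,
    smul_eq_mul, inv_mul_eq_div]

lemma sum_choose_mul_neg_one_pow_mul_rchoose (lam : ℝ) {n : ℕ} (hn : 1 ≤ n) :
    ∑ k ∈ Icc 1 n, (n.choose k : ℝ) * ((-1) ^ (k - 1) * rchoose (lam + k - 1) (k - 1)) =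
      (-1) ^ (n - 1) * rchoose (lam - 1) (n - 1) := by
  obtain ⟨n, rfl⟩ := Nat.exists_eq_add_of_le' hn
  simp only [rchoose_eq_ringChoose]
  rw [← Ico_add_one_right_eq_Icc, sum_Ico_eq_sum_range, add_tsub_cancel_right,
    add_tsub_cancel_right, ← Ring.sum_choose_mul_neg_one_pow_mul_choose]
  refine sum_congr rfl fun k _ => ?_
  rw [add_tsub_cancel_left, add_comm 1 k, Nat.cast_add_one, ← add_assoc, add_sub_cancel_right]

section HarmonicSum

variable {K : Type*} [Field K]

def harmonicSum (f : ℕ → K) (n : ℕ) : K := ∑ j ∈ Icc 1 n, f j / j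

lemma iterate_harmonicSum_congr {f g : ℕ → K} (h : ∀ j, 1 ≤ j → f j = g j) (m : ℕ) :
    harmonicSum^[m + 1] f = harmonicSum^[m + 1] g := by
  have hfg : harmonicSum f = harmonicSum g :=
    funext fun n => sum_congr rfl fun j hj => by rw [h j (mem_Icc.mp hj).1]
  rw [Function.iterate_succ_apply, Function.iterate_succ_apply, hfg]

variable [CharZero K]

lemma sum_Icc_choose_div (k n : ℕ) :
    ∑ j ∈ Icc (k + 1) n, (j.choose (k + 1) : K) / j = n.choose (k + 1) / (k + 1) := by
  induction n with
  | zero => simp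
  | succ n ih =>
    rcases Nat.lt_or_ge n k with hnk | hkn
    · rw [Icc_eq_empty (by omega), Nat.choose_eq_zero_of_lt (by omega)]
      simp
    rw [sum_Icc_succ_top (by omega), ih]
    have hpascal : ((n + 1).choose (k + 1) : K) = n.choose k + n.choose (k + 1) := by
      exact_mod_cast Nat.choose_succ_succ n k
    have habsorb : ((n + 1 : ℕ) * n.choose k : K) = (n + 1).choose (k + 1) * (k + 1) := by
      exact_mod_cast Nat.add_one_mul_choose_eq n k
    field_simp
    push_cast at habsorb ⊢
    linear_combination -(↑n + 1) * hpascal - habsorb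

lemma sum_choose_mul_div_pow_succ (ψ : ℕ → K) (m n : ℕ) :
    ∑ k ∈ Icc 1 n, (n.choose k : K) * ψ k / k ^ (m + 1) =
      harmonicSum (fun j => ∑ k ∈ Icc 1 j, (j.choose k : K) * ψ k / k ^ m) n := by
  simp only [harmonicSum, sum_div]
  rw [sum_comm' (t' := Icc 1 n) (s' := fun k => Icc k n) (by intros; simp only [mem_Icc]; omega)]
  refine sum_congr rfl fun k hk => ?_
  obtain ⟨k, rfl⟩ : ∃ k', k = k' + 1 := ⟨k - 1, by simp at hk; omega⟩
  calc ((n.choose (k + 1) : ℕ) : K) * ψ (k + 1) / ((k + 1 : ℕ) : K) ^ (m + 1)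
      = ψ (k + 1) / ((k + 1 : ℕ) : K) ^ m * (n.choose (k + 1) / (k + 1)) := by
        rw [div_mul_div_comm, mul_comm (ψ _), pow_succ, Nat.cast_add_one]
    _ = ψ (k + 1) / ((k + 1 : ℕ) : K) ^ m * ∑ j ∈ Icc (k + 1) n, (j.choose (k + 1) : K) / j := by
        rw [sum_Icc_choose_div]
    _ = _ := by
        rw [mul_sum]
        exact sum_congr rfl fun j _ => by ring

lemma sum_choose_mul_div_pow_eq_iterate (ψ : ℕ → K) (m n : ℕ) :
    ∑ k ∈ Icc 1 n, (n.choose k : K) * ψ k / k ^ m =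
      harmonicSum^[m] (fun j => ∑ k ∈ Icc 1 j, (j.choose k : K) * ψ k) n := by
  induction m generalizing n with
  | zero => simp
  | succ m ih =>
    rw [sum_choose_mul_div_pow_succ, Function.iterate_succ_apply']
    exact congrArg (harmonicSum · n) (funext ih)

end HarmonicSum

lemma Fin.monotone_snoc_iff {α : Type*} [Preorder α] {n : ℕ} {f : Fin n → α} {a : α} :
    Monotone (Fin.snoc f a : Fin (n + 1) → α) ↔ Monotone f ∧ ∀ i, f i ≤ a := by
  refine ⟨fun h => ⟨fun i j hij => ?_, fun i => ?_⟩, fun ⟨hf, ha⟩ i j hij => ?_⟩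
  · simpa using h (Fin.castSucc_le_castSucc_iff.mpr hij)
  · simpa using h (Fin.le_last (Fin.castSucc i))
  · induction j using Fin.lastCases with
    | last =>
      induction i using Fin.lastCases with
      | last => exact le_rfl
      | cast i => simpa using ha i
    | cast j =>
      induction i using Fin.lastCases with
      | last => exact absurd hij (Fin.castSucc_lt_last j).not_ge
      | cast i => simpa using hf (Fin.castSucc_le_castSucc_iff.mp hij)

def monotoneTuples (m n : ℕ) : Finset (Fin m → ℕ) :=
  filter (fun t : Fin m → ℕ => ∀ i j : Fin m, i ≤ j → t i ≤ t j)
    (Fintype.piFinset fun _ : Fin m => Icc 1 n)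

lemma snoc_mem_monotoneTuples_iff {m n j : ℕ} {s : Fin m → ℕ} :
    (Fin.snoc s j : Fin (m + 1) → ℕ) ∈ monotoneTuples (m + 1) n ↔
      j ∈ Icc 1 n ∧ s ∈ monotoneTuples m j := by
  simp only [monotoneTuples, mem_filter, Fintype.mem_piFinset, mem_Icc]
  change _ ∧ Monotone _ ↔ _ ∧ _ ∧ Monotone s
  rw [Fin.monotone_snoc_iff, Fin.forall_fin_succ']
  simp only [Fin.snoc_castSucc, Fin.snoc_last]
  grind

lemma sum_monotoneTuples_succ {M : Type*} [AddCommMonoid M] (m n : ℕ)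
    (F : (Fin (m + 1) → ℕ) → M) :
    ∑ t ∈ monotoneTuples (m + 1) n, F t =
      ∑ j ∈ Icc 1 n, ∑ s ∈ monotoneTuples m j, F (Fin.snoc s j) := by
  rw [sum_sigma']
  refine sum_bij' (fun t _ => ⟨t (Fin.last m), Fin.init t⟩) (fun p _ => Fin.snoc p.2 p.1)
    (fun t ht => ?_) (fun p hp => ?_) (fun t _ => Fin.snoc_init_self t)
    (fun p _ => by simp) (fun t _ => by simp)
  · rw [← Fin.snoc_init_self t, snoc_mem_monotoneTuples_iff] at ht
    simpa using ht
  · exact snoc_mem_monotoneTuples_iff.mpr (mem_sigma.mp hp)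

lemma sum_monotoneTuples_div_prod {K : Type*} [Field K] (φ : ℕ → K) (m n : ℕ) :
    ∑ t ∈ monotoneTuples (m + 1) n, φ (t 0) / ∏ i, (t i : K) = harmonicSum^[m + 1] φ n := by
  induction m generalizing n with
  | zero =>
    rw [sum_monotoneTuples_succ]
    simp [monotoneTuples, harmonicSum, Fin.snoc]
  | succ m ih =>
    rw [sum_monotoneTuples_succ, Function.iterate_succ_apply']
    refine sum_congr rfl fun j _ => ?_
    rw [← ih, sum_div]
    refine sum_congr rfl fun s _ => ?_
    rw [Fin.prod_univ_castSucc, ← div_div, ← Fin.castSucc_zero]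
    simp only [Fin.snoc_castSucc, Fin.snoc_last]

theorem sum_choose_pow_eq_multiple_sum_general (lam : ℝ) (n m : ℕ) (hm : 0 < m) :
    ∑ k ∈ Finset.Icc 1 n,
        (n.choose k : ℝ) * ((-1) ^ (k - 1) / (k : ℝ) ^ m) * rchoose (lam + k - 1) (k - 1) =
      ∑ t ∈ Finset.filter (fun t : Fin m → ℕ => ∀ i j : Fin m, i ≤ j → t i ≤ t j)
          (Fintype.piFinset fun _ : Fin m => Finset.Icc 1 n),
        (-1 : ℝ) ^ (t ⟨0, hm⟩ - 1) / (∏ i, (t i : ℝ)) * rchoose (lam - 1) (t ⟨0, hm⟩ - 1) := by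
  obtain ⟨m, rfl⟩ := Nat.exists_eq_add_of_le' hm
  let ψ (k : ℕ) : ℝ := (-1) ^ (k - 1) * rchoose (lam + k - 1) (k - 1)
  let φ (k : ℕ) : ℝ := (-1) ^ (k - 1) * rchoose (lam - 1) (k - 1)
  calc _ = ∑ k ∈ Icc 1 n, (n.choose k : ℝ) * ψ k / k ^ (m + 1) :=
        sum_congr rfl fun k _ => by ring
    _ = harmonicSum^[m + 1] (fun j => ∑ k ∈ Icc 1 j, (j.choose k : ℝ) * ψ k) n :=
        sum_choose_mul_div_pow_eq_iterate ψ (m + 1) n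
    _ = harmonicSum^[m + 1] φ n := by
        rw [iterate_harmonicSum_congr fun j hj => sum_choose_mul_neg_one_pow_mul_rchoose lam hj]
    _ = ∑ t ∈ monotoneTuples (m + 1) n, φ (t 0) / ∏ i, (t i : ℝ) :=
        (sum_monotoneTuples_div_prod φ m n).symm
    _ = _ := sum_congr rfl fun t _ => (div_mul_eq_mul_div _ _ _).symm

theorem sum_choose_pow_eq_multiple_sum (lam : ℝ) (n m : ℕ) (hn : 1 ≤ n) (hm : 0 < m) :
    ∑ k ∈ Finset.Icc 1 n,
        (n.choose k : ℝ) * ((-1) ^ (k - 1) / (k : ℝ) ^ m) * rchoose (lam + k - 1) (k - 1) =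
      ∑ t ∈ Finset.filter (fun t : Fin m → ℕ => ∀ i j : Fin m, i ≤ j → t i ≤ t j)
          (Fintype.piFinset fun _ : Fin m => Finset.Icc 1 n),
        (-1 : ℝ) ^ (t ⟨0, hm⟩ - 1) / (∏ i, (t i : ℝ)) * rchoose (lam - 1) (t ⟨0, hm⟩ - 1) :=
  sum_choose_pow_eq_multiple_sum_general lam n m hm
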